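/- arXiv:2205.07840 — 2 statements merged into one kernel-verified Lean document; each statement's English description precedes it below -/
import Mathlib

section
/- Let φ : ℝ × M → M be a continuous flow on a metric space M, A ⊆ M a compact asymptotically stable invariant set with basin of attraction B, and V : B → [0,∞) a continuous function with V⁻¹(0) = A, proper sublevel sets, and V strictly decreasing along nonconstant orbits. Then for every c > 0 and every x ∈ B \ A, there is a unique t ∈ ℝ with V(φ(t,x)) = c. -/
open Filter Topology

/-- For a continuous flow with a compact asymptotically stable set `A` with basin `B` and a
proper continuous Lyapunov function `V` strictly decreasing along nonconstant orbits, every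
positive level `c` is attained exactly once along the orbit of any `x ∈ B \ A`. -/
theorem stmt3 {M : Type*} [MetricSpace M] (φ : ℝ → M → M)
    (hcont : Continuous fun p : ℝ × M => φ p.1 p.2)
    (hφ0 : ∀ x, φ 0 x = x) (hφadd : ∀ s t x, φ s (φ t x) = φ (s + t) x)
    (A : Set M) (hA : IsCompact A) (hAinv : ∀ t, φ t '' A = A)
    (B : Set M)
    (hB : B = {x | Tendsto (fun t => Metric.infDist (φ t x) A) atTop (𝓝 0)})
    (hstab : ∀ W : Set M, IsOpen W → A ⊆ W →
      ∃ V' : Set M, IsOpen V' ∧ A ⊆ V' ∧ (∀ x ∈ V', ∀ t ≥ (0 : ℝ), φ t x ∈ W) ∧ V' ⊆ B)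
    (V : M → ℝ) (hVcont : ContinuousOn V B) (hVnonneg : ∀ x ∈ B, 0 ≤ V x)
    (hVzero : ∀ x ∈ B, (V x = 0 ↔ x ∈ A))
    (hVproper : ∀ c : ℝ, IsCompact {x ∈ B | V x ≤ c})
    (hVdec : ∀ x ∈ B \ A, StrictAnti fun t : ℝ => V (φ t x)) :
    ∀ c > (0 : ℝ), ∀ x ∈ B \ A, ∃! t : ℝ, V (φ t x) = c := by
  -- continuity of each time-t map
  have hφt : ∀ t : ℝ, Continuous (φ t) := fun t =>
    hcont.comp (continuous_const.prodMk continuous_id)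
  -- B is invariant under the flow
  have hBinv : ∀ s : ℝ, ∀ x ∈ B, φ s x ∈ B := by
    intro s x hx
    rw [hB] at hx ⊢
    simp only [Set.mem_setOf_eq] at hx ⊢
    have h1 : Tendsto (fun t : ℝ => t + s) atTop atTop :=
      tendsto_atTop_add_const_right _ s tendsto_id
    have h2 := hx.comp h1
    simp only [Function.comp_def] at h2
    simpa [hφadd] using h2
  intro c hc x hx
  set g : ℝ → ℝ := fun t => V (φ t x) with hg
  have hganti : StrictAnti g := hVdec x hx
  have horb : ∀ t : ℝ, φ t x ∈ B := fun t => hBinv t x hx.1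
  have hgcont : Continuous g := by
    have h1 : Continuous fun t : ℝ => φ t x :=
      hcont.comp (continuous_id.prodMk continuous_const)
    have : ContinuousOn g Set.univ := by
      apply hVcont.comp h1.continuousOn
      intro t _
      exact horb t
    exact continuousOn_univ.mp this
  have hVx : 0 < V x := by
    rcases lt_or_eq_of_le (hVnonneg x hx.1) with h | h
    · exact h
    · exact absurd ((hVzero x hx.1).mp h.symm) hx.2
  -- key compactness lemma
  have key : ∀ (u : ℕ → ℝ) (y : M) (L : ℝ), y ∈ B →
      Tendsto (fun n => φ (u n) x) atTop (𝓝 y) →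
      (∀ s : ℝ, Tendsto (fun n => g (s + u n)) atTop (𝓝 L)) → L = 0 := by
    intro u y L hyB hconv hgL
    have hVconst : ∀ s : ℝ, V (φ s y) = L := by
      intro s
      have h1 : Tendsto (fun n => φ s (φ (u n) x)) atTop (𝓝 (φ s y)) :=
        ((hφt s).tendsto y).comp hconv
      have h2 : Tendsto (fun n => φ s (φ (u n) x)) atTop (𝓝[B] (φ s y)) := by
        apply tendsto_nhdsWithin_of_tendsto_nhds_of_eventually_within _ h1
        filter_upwards with n
        rw [hφadd]
        exact horb _
      have h3 : Tendsto (fun n => V (φ s (φ (u n) x))) atTop (𝓝 (V (φ s y))) :=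
        (hVcont (φ s y) (hBinv s y hyB)).tendsto.comp h2
      have h4 : Tendsto (fun n => V (φ s (φ (u n) x))) atTop (𝓝 L) := by
        have := hgL s
        simpa [hg, hφadd] using this
      exact tendsto_nhds_unique h3 h4
    have hyA : y ∈ A := by
      by_contra hyA
      have hsa := hVdec y ⟨hyB, hyA⟩
      have h01 := hsa (show (0:ℝ) < 1 by norm_num)
      simp only [hVconst] at h01
      exact lt_irrefl _ h01
    have : V y = 0 := (hVzero y hyB).mpr hyA
    have h0 := hVconst 0
    rw [hφ0] at h0
    linarith
  -- forward: some value below c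
  have hfwd : ∃ t : ℝ, g t < c := by
    by_contra hno
    push_neg at hno
    have hbdd : BddBelow (Set.range g) := ⟨c, by rintro _ ⟨t, rfl⟩; exact hno t⟩
    have hL : Tendsto g atTop (𝓝 (⨅ t, g t)) := tendsto_atTop_ciInf hganti.antitone hbdd
    have hmem : ∀ n : ℕ, φ (n : ℝ) x ∈ {y ∈ B | V y ≤ g 0} := by
      intro n
      exact ⟨horb _, hganti.antitone (Nat.cast_nonneg n)⟩
    obtain ⟨y, hyK, ψ, hψ, hconv⟩ := (hVproper (g 0)).tendsto_subseq hmem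
    have hL0 : (⨅ t, g t) = 0 := by
      apply key (fun n => ((ψ n : ℕ) : ℝ)) y _ hyK.1 hconv
      intro s
      have h1 : Tendsto (fun n : ℕ => s + ((ψ n : ℕ) : ℝ)) atTop atTop := by
        apply tendsto_atTop_add_const_left
        exact tendsto_natCast_atTop_atTop.comp hψ.tendsto_atTop
      exact hL.comp h1
    have : c ≤ ⨅ t, g t := le_ciInf hno
    linarith
  -- backward: some value above c
  have hbwd : ∃ t : ℝ, c < g t := by
    by_contra hno
    push_neg at hno
    have hbdd : BddAbove (Set.range g) := ⟨c, by rintro _ ⟨t, rfl⟩; exact hno t⟩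
    have hL : Tendsto g atBot (𝓝 (⨆ t, g t)) := tendsto_atBot_ciSup hganti.antitone hbdd
    have hmem : ∀ n : ℕ, φ (-(n : ℝ)) x ∈ {y ∈ B | V y ≤ c} := by
      intro n
      exact ⟨horb _, hno _⟩
    obtain ⟨y, hyK, ψ, hψ, hconv⟩ := (hVproper c).tendsto_subseq hmem
    have hL0 : (⨆ t, g t) = 0 := by
      apply key (fun n => -((ψ n : ℕ) : ℝ)) y _ hyK.1 hconv
      intro s
      have h1 : Tendsto (fun n : ℕ => s + -((ψ n : ℕ) : ℝ)) atTop atBot := by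
        apply tendsto_atBot_add_const_left
        exact tendsto_neg_atTop_atBot.comp (tendsto_natCast_atTop_atTop.comp hψ.tendsto_atTop)
      exact hL.comp h1
    have : g 0 ≤ ⨆ t, g t := le_ciSup hbdd 0
    have hg0 : g 0 = V x := by simp [hg, hφ0]
    linarith
  obtain ⟨tlo, htlo⟩ := hfwd
  obtain ⟨thi, hthi⟩ := hbwd
  have hlt : thi < tlo := by
    by_contra h
    push_neg at h
    have := hganti.antitone h
    linarith
  have hIVT := intermediate_value_Icc' (le_of_lt hlt) hgcont.continuousOn
  obtain ⟨t, _, ht⟩ := hIVT ⟨le_of_lt htlo, le_of_lt hthi⟩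
  exact ⟨t, ht, fun t' ht' => hganti.injective (ht'.trans ht.symm)⟩
end

section
/- Let φ : ℝ × M → M be a continuous flow on a metric space M, A a compact asymptotically stable set with basin B, and V a proper continuous Lyapunov function on B strictly decreasing along orbits in B \ A. Fix c > 0 and set N = V⁻¹(c). Then the map Φ : ℝ × N → B \ A, Φ(t, n) = φ(t, n), is a homeomorphism. -/
open Filter Topology

/-- Product structure of the punctured basin: `(t, n) ↦ φ(t, n)` is a homeomorphism from
`ℝ × N` onto `B \ A`, where `N = V⁻¹(c)` is a level set of a proper Lyapunov function. -/
theorem stmt4 {M : Type*} [MetricSpace M] (φ : ℝ → M → M)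
    (hcont : Continuous fun p : ℝ × M => φ p.1 p.2)
    (hφ0 : ∀ x, φ 0 x = x) (hφadd : ∀ s t x, φ s (φ t x) = φ (s + t) x)
    (A : Set M) (hA : IsCompact A) (hAinv : ∀ t, φ t '' A = A)
    (B : Set M)
    (hB : B = {x | Tendsto (fun t => Metric.infDist (φ t x) A) atTop (𝓝 0)})
    (hBinv : ∀ t : ℝ, ∀ x ∈ B, φ t x ∈ B)
    (V : M → ℝ) (hVcont : ContinuousOn V B) (hVnonneg : ∀ x ∈ B, 0 ≤ V x)
    (hVzero : ∀ x ∈ B, (V x = 0 ↔ x ∈ A))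
    (hVproper : ∀ c : ℝ, IsCompact {x ∈ B | V x ≤ c})
    (hVdec : ∀ x ∈ B \ A, StrictAnti fun t : ℝ => V (φ t x))
    (hVsurj : ∀ x ∈ B \ A, Set.range (fun t : ℝ => V (φ t x)) = Set.Ioi 0)
    (c : ℝ) (hc : 0 < c) (N : Set M) (hN : N = B ∩ V ⁻¹' {c}) :
    ∃ h : ℝ × N ≃ₜ (B \ A : Set M), ∀ p : ℝ × N, (h p : M) = φ p.1 (p.2 : M) := by
  -- The punctured basin is flow-invariant.
  have hflow : ∀ (t : ℝ) (x : M), x ∈ B \ A → φ t x ∈ B \ A := by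
    intro t x hx
    refine ⟨hBinv t x hx.1, fun hmem => hx.2 ?_⟩
    have h1 : φ (-t) (φ t x) = x := by rw [hφadd, neg_add_cancel, hφ0]
    have h2 : φ (-t) (φ t x) ∈ φ (-t) '' A := ⟨_, hmem, rfl⟩
    rw [hAinv, h1] at h2
    exact h2
  -- The level set N lies in the punctured basin.
  have hNsub : N ⊆ B \ A := by
    intro n hn
    rw [hN] at hn
    refine ⟨hn.1, fun hA' => ?_⟩
    have h0 : V n = 0 := (hVzero n hn.1).2 hA'
    have hcn : V n = c := hn.2
    rw [h0] at hcn
    exact absurd hcn (by linarith)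
  -- Hitting time τ for the level set.
  have hex : ∀ x : (B \ A : Set M), ∃ t : ℝ, V (φ t (x : M)) = c := by
    intro x
    have : c ∈ Set.range fun t : ℝ => V (φ t (x : M)) := by
      rw [hVsurj _ x.2]; exact hc
    exact this
  choose τ hτ using hex
  have huniq : ∀ (x : (B \ A : Set M)) (t : ℝ), V (φ t (x : M)) = c → t = τ x :=
    fun x t ht => (hVdec _ x.2).injective (ht.trans (hτ x).symm)
  -- Continuity of time-slices of V along the flow.
  have hslice : ∀ s : ℝ, Continuous fun x : (B \ A : Set M) => V (φ s (x : M)) := by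
    intro s
    refine hVcont.comp_continuous
      (hcont.comp (continuous_const.prodMk continuous_subtype_val)) ?_
    exact fun x => hBinv s _ x.2.1
  -- Continuity of τ.
  have hτcont : Continuous τ := by
    rw [continuous_iff_continuousAt]
    intro x₀
    rw [ContinuousAt, Metric.tendsto_nhds]
    intro ε hε
    have h1 : V (φ (τ x₀ + ε) (x₀ : M)) < c := by
      have h := (hVdec _ x₀.2) (show τ x₀ < τ x₀ + ε by linarith)
      simpa only [hτ x₀] using h
    have h2 : c < V (φ (τ x₀ - ε) (x₀ : M)) := by
      have h := (hVdec _ x₀.2) (show τ x₀ - ε < τ x₀ by linarith)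
      simpa only [hτ x₀] using h
    have hU : IsOpen {x : (B \ A : Set M) |
        V (φ (τ x₀ + ε) (x : M)) < c ∧ c < V (φ (τ x₀ - ε) (x : M))} :=
      (isOpen_lt (hslice _) continuous_const).inter
        (isOpen_lt continuous_const (hslice _))
    filter_upwards [hU.mem_nhds ⟨h1, h2⟩] with x hx
    have hlt : τ x < τ x₀ + ε :=
      (hVdec _ x.2).lt_iff_gt.mp (by simpa only [hτ x] using hx.1)
    have hgt : τ x₀ - ε < τ x :=
      (hVdec _ x.2).lt_iff_gt.mp (by simpa only [hτ x] using hx.2)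
    rw [Real.dist_eq, abs_sub_lt_iff]
    constructor <;> linarith
  refine ⟨{
      toFun := fun p => ⟨φ p.1 (p.2 : M), hflow p.1 _ (hNsub p.2.2)⟩
      invFun := fun x => (-(τ x), ⟨φ (τ x) (x : M), by
        rw [hN]; exact ⟨hBinv _ _ x.2.1, hτ x⟩⟩)
      left_inv := ?_
      right_inv := ?_
      continuous_toFun := ?_
      continuous_invFun := ?_ }, fun p => rfl⟩
  · rintro ⟨t, n⟩
    have hnc : V (n : M) = c := by
      have hn2 : (n : M) ∈ B ∩ V ⁻¹' {c} := by rw [← hN]; exact n.2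
      exact hn2.2
    set x : (B \ A : Set M) := ⟨φ t (n : M), hflow t _ (hNsub n.2)⟩ with hxdef
    have hback : φ (-t) (φ t (n : M)) = (n : M) := by
      rw [hφadd, neg_add_cancel, hφ0]
    have hτx : τ x = -t := by
      refine (huniq x (-t) ?_).symm
      show V (φ (-t) (φ t (n : M))) = c
      rw [hback, hnc]
    refine Prod.ext ?_ ?_
    · show -τ x = t
      rw [hτx, neg_neg]
    · refine Subtype.ext ?_
      show φ (τ x) (φ t (n : M)) = (n : M)
      rw [hτx]; exact hback
  · intro x
    refine Subtype.ext ?_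
    show φ (-(τ x)) (φ (τ x) (x : M)) = (x : M)
    rw [hφadd, neg_add_cancel, hφ0]
  · refine Continuous.subtype_mk ?_ _
    exact hcont.comp (continuous_fst.prodMk (continuous_subtype_val.comp continuous_snd))
  · refine Continuous.prodMk hτcont.neg ?_
    refine Continuous.subtype_mk ?_ _
    exact hcont.comp (hτcont.prodMk continuous_subtype_val)
end
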